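/- arXiv:1601.03665 — 8 statements merged into one kernel-verified Lean document; each statement's English description precedes it below -/
import Mathlib

section
/- Let k be a field, a ∈ k, and let X, Y, Z ∈ k satisfy aX³ + Y³ + Z³ = XYZ (i.e., (X:Y:Z) lies on the twisted Hessian curve H). Then the point (X₀, Y₀, Z₀) = (aX³, Y³, Z³) satisfies X₀Y₀Z₀ = a(X₀ + Y₀ + Z₀)³, i.e., the map (X:Y:Z) ↦ (aX³:Y³:Z³) sends points of H to points of the quotient curve E: XYZ = a(X+Y+Z)³. -/
/-- The map `(X:Y:Z) ↦ (aX³:Y³:Z³)` sends points of the twisted Hessian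
curve `H : aX³ + Y³ + Z³ = XYZ` to points of the quotient curve
`E : XYZ = a(X+Y+Z)³`. -/
theorem twistedHessian_quotient_isogeny {k : Type*} [Field k] (a : k)
    (X Y Z : k) (h : a * X ^ 3 + Y ^ 3 + Z ^ 3 = X * Y * Z) :
    (a * X ^ 3) * (Y ^ 3) * (Z ^ 3) =
      a * (a * X ^ 3 + Y ^ 3 + Z ^ 3) ^ 3 := by
  rw [h]
  ring
end

section
/- Let k be a field, a, b ∈ k, and let X, Y, Z ∈ k satisfy Y²Z = X(X² + aXZ + bZ²). Set X' = Y²Z, Y' = (X² − bZ²)Y, Z' = X²Z. Then Y'²Z' = X'((X' − aZ')² − 4bZ'²); that is, the map (X:Y:Z) ↦ (Y²Z : (X²−bZ²)Y : X²Z) sends points of the Weierstrass curve Y²Z = X(X²+aXZ+bZ²) to points of the 2-isogenous curve Y²Z = X((X−aZ)² − 4bZ²). -/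
/-- The map `(X:Y:Z) ↦ (Y²Z : (X²−bZ²)Y : X²Z)` sends points of the
Weierstrass curve `Y²Z = X(X²+aXZ+bZ²)` to points of the 2-isogenous
curve `Y²Z = X((X−aZ)² − 4bZ²)`. -/
theorem two_isogeny_weierstrass {k : Type*} [Field k] (a b : k)
    (X Y Z : k) (h : Y ^ 2 * Z = X * (X ^ 2 + a * X * Z + b * Z ^ 2)) :
    ((X ^ 2 - b * Z ^ 2) * Y) ^ 2 * (X ^ 2 * Z) =
      (Y ^ 2 * Z) *
        ((Y ^ 2 * Z - a * (X ^ 2 * Z)) ^ 2 - 4 * b * (X ^ 2 * Z) ^ 2) := by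
  have hX'_sub_aZ' : Y ^ 2 * Z - a * (X ^ 2 * Z) = X * (X ^ 2 + b * Z ^ 2) := by
    rw [h]; ring
  -- what remains is `(X² + bZ²)² - 4bX²Z² = (X² - bZ²)²`
  rw [hX'_sub_aZ']
  ring
end

section
/- Let k be a field and u, v ∈ k. If (X₀, X₁, X₂, X₃) ∈ k⁴ satisfies the equations of Q₁ (namely X₃² + X₁X₃ = (X₀ + uX₁ − vX₂)X₁ and X₁² = X₀X₂), then the quadruple ψ(X₀,X₁,X₂,X₃) = ((X₀ − vX₂)², (X₀ − vX₂)X₁, X₁², vX₁X₂ + (X₀ + vX₂)X₃) satisfies the equations of Q₂ (namely X₃² + X₁X₃ = (X₀ + 4vX₂)(X₁ + uX₂) + vX₂² and X₁² = X₀X₂). Moreover ψ(1,0,0,0) = (1,0,0,0) and ψ(0,0,1,0) = v²·(1,0,0,0), so the kernel point T = (0:0:1:0) maps to the identity (1:0:0:0). -/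
/-!
The conic equation is preserved identically: the first three coordinates of `ψ` are
`(a², a X₁, X₁²)` with `a = X₀ - v X₂`. For the quadric, write `b = X₀ + v X₂` and
substitute the equation of `Q₁` for `b² X₃²`; the terms linear in `X₃` then cancel
because `a + 2 v X₂ = b`, and what remains agrees with the equation of `Q₂` modulo
`X₁² = X₀ X₂`, using `a² + 4 v X₀ X₂ = b²`.
-/

/-- The tuple of quadratic forms defining the 2-isogeny `ψ : Q₁ → Q₂`
with kernel generated by `(0:0:1:0)`. -/
def psiIsog {k : Type*} [Field k] (v : k) :
    k × k × k × k → k × k × k × k :=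
  fun P =>
    ((P.1 - v * P.2.2.1) ^ 2,
     (P.1 - v * P.2.2.1) * P.2.1,
     P.2.1 ^ 2,
     v * P.2.1 * P.2.2.1 + (P.1 + v * P.2.2.1) * P.2.2.2)

section Isogeny

variable {k : Type*} [Field k]

def OnQ₁ (u v : k) (P : k × k × k × k) : Prop :=
  P.2.2.2 ^ 2 + P.2.1 * P.2.2.2 = (P.1 + u * P.2.1 - v * P.2.2.1) * P.2.1 ∧
    P.2.1 ^ 2 = P.1 * P.2.2.1

def OnQ₂ (u v : k) (P : k × k × k × k) : Prop :=
  P.2.2.2 ^ 2 + P.2.1 * P.2.2.2 = (P.1 + 4 * v * P.2.2.1) * (P.2.1 + u * P.2.2.1) +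
      v * P.2.2.1 ^ 2 ∧
    P.2.1 ^ 2 = P.1 * P.2.2.1

theorem psiIsog_conic (v : k) (P : k × k × k × k) :
    (psiIsog v P).2.1 ^ 2 = (psiIsog v P).1 * (psiIsog v P).2.2.1 := by
  simp only [psiIsog]
  ring

theorem OnQ₁.onQ₂_psiIsog {u v : k} {P : k × k × k × k} (hP : OnQ₁ u v P) :
    OnQ₂ u v (psiIsog v P) := by
  obtain ⟨X₀, X₁, X₂, X₃⟩ := P
  obtain ⟨hQuadric, hConic⟩ := hP
  refine ⟨?_, psiIsog_conic v _⟩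
  simp only [psiIsog]
  calc (v * X₁ * X₂ + (X₀ + v * X₂) * X₃) ^ 2
          + (X₀ - v * X₂) * X₁ * (v * X₁ * X₂ + (X₀ + v * X₂) * X₃)
      = v ^ 2 * X₁ ^ 2 * X₂ ^ 2 + (X₀ + v * X₂) ^ 2 * (X₀ + u * X₁ - v * X₂) * X₁
          + (X₀ - v * X₂) * v * X₁ ^ 2 * X₂ := by
        linear_combination (X₀ + v * X₂) ^ 2 * hQuadric
    _ = ((X₀ - v * X₂) ^ 2 + 4 * v * X₁ ^ 2) * ((X₀ - v * X₂) * X₁ + u * X₁ ^ 2)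
          + v * (X₁ ^ 2) ^ 2 := by
        linear_combination -(v * X₁ ^ 2 + 4 * v * X₁ * (X₀ - v * X₂ + u * X₁)) * hConic

theorem psiIsog_identity (v : k) : psiIsog v ((1 : k), 0, 0, 0) = (1, 0, 0, 0) := by
  simp [psiIsog]

theorem psiIsog_kernelPoint (v : k) : psiIsog v ((0 : k), 0, 1, 0) = (v ^ 2, 0, 0, 0) := by
  simp [psiIsog]

end Isogeny

/-- The 2-isogeny `ψ` maps points of `Q₁` to points of `Q₂`, sends the
identity `(1:0:0:0)` to itself, and sends the kernel point
`T = (0:0:1:0)` to `v²·(1:0:0:0)`, i.e. to the identity. -/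
theorem psi_maps_Q1_to_Q2 {k : Type*} [Field k] (u v : k)
    (X₀ X₁ X₂ X₃ : k)
    (h1 : X₃ ^ 2 + X₁ * X₃ = (X₀ + u * X₁ - v * X₂) * X₁)
    (h2 : X₁ ^ 2 = X₀ * X₂) :
    (let Y := psiIsog v (X₀, X₁, X₂, X₃)
     Y.2.2.2 ^ 2 + Y.2.1 * Y.2.2.2 =
        (Y.1 + 4 * v * Y.2.2.1) * (Y.2.1 + u * Y.2.2.1) +
          v * Y.2.2.1 ^ 2 ∧
     Y.2.1 ^ 2 = Y.1 * Y.2.2.1) ∧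
    psiIsog v ((1 : k), 0, 0, 0) = (1, 0, 0, 0) ∧
    psiIsog v ((0 : k), 0, 1, 0) = (v ^ 2, 0, 0, 0) :=
  ⟨OnQ₁.onQ₂_psiIsog (P := (X₀, X₁, X₂, X₃)) ⟨h1, h2⟩, psiIsog_identity v,
    psiIsog_kernelPoint v⟩
end

section
/- Let k be a field and u, v ∈ k. If (X₀, X₁, X₂, X₃) ∈ k⁴ satisfies the equations of Q₂ (namely X₃² + X₁X₃ = (X₀ + 4vX₂)(X₁ + uX₂) + vX₂² and X₁² = X₀X₂), then the quadruple φ(X₀,X₁,X₂,X₃) = ((X₀ + 4vX₂)², (X₁ + 2X₃)², (4X₁ + (4u+1)X₂)², f₃), where f₃ = uX₁² − 8vX₁X₂ − (4u+1)vX₂² + 2X₀X₃ + 4uX₁X₃ − 8vX₂X₃ − X₃², satisfies the equations of Q₁ (namely X₃² + X₁X₃ = (X₀ + uX₁ − vX₂)X₁ and X₁² = X₀X₂). -/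
/-!
Write `A = X₀ + 4vX₂`, `B = 4X₁ + (4u+1)X₂`, `S = X₁ + 2X₃` and `W = X₀ + 2uX₁ - 4vX₂ - X₃`.
Modulo the two quadrics cutting out `Q₂` one has `S² = AB` and `f₃ = SW`, so
`φ = (A², S², B², SW)`. For a quadruple of this shape the second equation of `Q₁` is the square
of `S² = AB`, and the first is `S²` times the quadric relation `W² + SW = A² + uS² - vB²`,
which again holds on `Q₂`.
-/

section

variable {k : Type*} [CommRing k]

def IsOnQ₁ (u v X₀ X₁ X₂ X₃ : k) : Prop :=
  X₃ ^ 2 + X₁ * X₃ = (X₀ + u * X₁ - v * X₂) * X₁ ∧ X₁ ^ 2 = X₀ * X₂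

theorem isOnQ₁_sq_sq_sq_mul (u v : k) {a s b w : k}
    (hw : w ^ 2 + s * w = a ^ 2 + u * s ^ 2 - v * b ^ 2) (hs : s ^ 2 = a * b) :
    IsOnQ₁ u v (a ^ 2) (s ^ 2) (b ^ 2) (s * w) :=
  ⟨by linear_combination s ^ 2 * hw, by linear_combination (s ^ 2 + a * b) * hs⟩

section Q₂

variable {u v X₀ X₁ X₂ X₃ : k}
  (h1 : X₃ ^ 2 + X₁ * X₃ = (X₀ + 4 * v * X₂) * (X₁ + u * X₂) + v * X₂ ^ 2)
  (h2 : X₁ ^ 2 = X₀ * X₂)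
include h1 h2

theorem sq_eq_mul_of_Q₂ :
    (X₁ + 2 * X₃) ^ 2 = (X₀ + 4 * v * X₂) * (4 * X₁ + (4 * u + 1) * X₂) := by
  linear_combination 4 * h1 + h2

theorem phi₃_eq_mul_of_Q₂ :
    u * X₁ ^ 2 - 8 * v * X₁ * X₂ - (4 * u + 1) * v * X₂ ^ 2 +
      2 * X₀ * X₃ + 4 * u * X₁ * X₃ - 8 * v * X₂ * X₃ - X₃ ^ 2 =
      (X₁ + 2 * X₃) * (X₀ + 2 * u * X₁ - 4 * v * X₂ - X₃) := by
  linear_combination h1 - u * h2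

theorem quadric_relation_of_Q₂ :
    (X₀ + 2 * u * X₁ - 4 * v * X₂ - X₃) ^ 2 +
        (X₁ + 2 * X₃) * (X₀ + 2 * u * X₁ - 4 * v * X₂ - X₃) =
      (X₀ + 4 * v * X₂) ^ 2 + u * (X₁ + 2 * X₃) ^ 2 - v * (4 * X₁ + (4 * u + 1) * X₂) ^ 2 := by
  linear_combination (-1 - 4 * u) * h1 + (4 * u ^ 2 + u + 16 * v) * h2

end Q₂

end

/-- The dual 2-isogeny `φ` maps points of `Q₂` to points of `Q₁`. -/
theorem phi_maps_Q2_to_Q1 {k : Type*} [Field k] (u v : k)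
    (X₀ X₁ X₂ X₃ : k)
    (h1 : X₃ ^ 2 + X₁ * X₃ =
      (X₀ + 4 * v * X₂) * (X₁ + u * X₂) + v * X₂ ^ 2)
    (h2 : X₁ ^ 2 = X₀ * X₂) :
    (let Y₀ := (X₀ + 4 * v * X₂) ^ 2
     let Y₁ := (X₁ + 2 * X₃) ^ 2
     let Y₂ := (4 * X₁ + (4 * u + 1) * X₂) ^ 2
     let Y₃ := u * X₁ ^ 2 - 8 * v * X₁ * X₂ - (4 * u + 1) * v * X₂ ^ 2 +
       2 * X₀ * X₃ + 4 * u * X₁ * X₃ - 8 * v * X₂ * X₃ - X₃ ^ 2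
     Y₃ ^ 2 + Y₁ * Y₃ = (Y₀ + u * Y₁ - v * Y₂) * Y₁ ∧
       Y₁ ^ 2 = Y₀ * Y₂) := by
  intro Y₀ Y₁ Y₂ Y₃
  have hY₃ : Y₃ = (X₁ + 2 * X₃) * (X₀ + 2 * u * X₁ - 4 * v * X₂ - X₃) :=
    phi₃_eq_mul_of_Q₂ h1 h2
  rw [hY₃]
  exact isOnQ₁_sq_sq_sq_mul u v (quadric_relation_of_Q₂ h1 h2) (sq_eq_mul_of_Q₂ h1 h2)
end

section
/- Let k be a field of characteristic different from 2 and u, v ∈ k. Set f₀ = (X₀−vX₂)², f₁ = (X₀−vX₂)X₁, f₂ = X₁², f₃ = vX₁X₂ + (X₀+vX₂)X₃ (the defining forms of the 2-isogeny ψ: Q₁ → Q₂), and set g₀ = (X₀ − vX₂)², g₁ = (X₀ − vX₂ + X₁)², g₂ = X₁², g₃ = (X₀ + X₁ + vX₂ + 2X₃)². Then for every (X₀,X₁,X₂,X₃) ∈ k⁴ satisfying the equations of Q₁: f₀ = g₀, f₂ = g₂, 2f₁ = g₁ − g₀ − g₂, and 4f₃ = 2g₀ − 3g₁ + (2 − 4u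 − 4v)g₂ + g₃. Hence the span of the f's equals the span of the squares g₀, g₁, g₂, g₃ modulo the relations of Q₁, so ψ can be evaluated using only 4 squarings. -/
theorem psi_square_forms_char_ne_two_general {k : Type*} [Field k]
    (u v : k) (X₀ X₁ X₂ X₃ : k)
    (h1 : X₃ ^ 2 + X₁ * X₃ = (X₀ + u * X₁ - v * X₂) * X₁)
    (h2 : X₁ ^ 2 = X₀ * X₂) :
    (let f₀ := (X₀ - v * X₂) ^ 2
     let f₁ := (X₀ - v * X₂) * X₁
     let f₂ := X₁ ^ 2
     let f₃ := v * X₁ * X₂ + (X₀ + v * X₂) * X₃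
     let g₀ := (X₀ - v * X₂) ^ 2
     let g₁ := (X₀ - v * X₂ + X₁) ^ 2
     let g₂ := X₁ ^ 2
     let g₃ := (X₀ + X₁ + v * X₂ + 2 * X₃) ^ 2
     f₀ = g₀ ∧ f₂ = g₂ ∧ 2 * f₁ = g₁ - g₀ - g₂ ∧
       4 * f₃ = 2 * g₀ - 3 * g₁ + (2 - 4 * u - 4 * v) * g₂ + g₃) := by
  refine ⟨rfl, rfl, by ring, ?_⟩
  linear_combination (-4 : k) * h1 + (4 * v : k) * h2

/-- In characteristic different from 2, the defining forms
`(f₀,f₁,f₂,f₃)` of the 2-isogeny `ψ : Q₁ → Q₂` are spanned, modulo the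
relations of `Q₁`, by the four squares `g₀, g₁, g₂, g₃`: explicitly
`f₀ = g₀`, `f₂ = g₂`, `2f₁ = g₁ − g₀ − g₂` and
`4f₃ = 2g₀ − 3g₁ + (2−4u−4v)g₂ + g₃` hold on `Q₁`. -/
theorem psi_square_forms_char_ne_two {k : Type*} [Field k]
    (hchar : (2 : k) ≠ 0) (u v : k) (X₀ X₁ X₂ X₃ : k)
    (h1 : X₃ ^ 2 + X₁ * X₃ = (X₀ + u * X₁ - v * X₂) * X₁)
    (h2 : X₁ ^ 2 = X₀ * X₂) :
    (let f₀ := (X₀ - v * X₂) ^ 2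
     let f₁ := (X₀ - v * X₂) * X₁
     let f₂ := X₁ ^ 2
     let f₃ := v * X₁ * X₂ + (X₀ + v * X₂) * X₃
     let g₀ := (X₀ - v * X₂) ^ 2
     let g₁ := (X₀ - v * X₂ + X₁) ^ 2
     let g₂ := X₁ ^ 2
     let g₃ := (X₀ + X₁ + v * X₂ + 2 * X₃) ^ 2
     f₀ = g₀ ∧ f₂ = g₂ ∧ 2 * f₁ = g₁ - g₀ - g₂ ∧
       4 * f₃ = 2 * g₀ - 3 * g₁ + (2 - 4 * u - 4 * v) * g₂ + g₃) :=
  psi_square_forms_char_ne_two_general u v X₀ X₁ X₂ X₃ h1 h2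
end

section
/- Let k be a field of characteristic 2 and u, v ∈ k. Set f₀ = (X₀−vX₂)², f₁ = (X₀−vX₂)X₁, f₂ = X₁², f₃ = vX₁X₂ + (X₀+vX₂)X₃ (the defining forms of the 2-isogeny ψ: Q₁ → Q₂), and set g₀ = (X₀ + vX₂)², g₁ = (X₁ + X₃)X₃, g₂ = X₁², g₃ = (X₀ + v(X₁ + X₃))(X₂ + X₃). Then for every (X₀,X₁,X₂,X₃) ∈ k⁴ satisfying the equations of Q₁: g₀ = f₀, g₂ = f₂, g₁ = f₁ + u·f₂, and g₃ = v·f₁ + (1 + uv)·f₂ + f₃. In particular the g's and the f's span the same space modulo the relations of Q₁, and the transformation between them is invertible (determinant 1). -/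
/-! In characteristic 2 every minus sign may be read as a plus sign. Once the equations of `Q₁`
are rewritten this way, `g₀ = f₀` and `g₂ = f₂` are syntactic, `g₁ = f₁ + u f₂` is the first
equation of `Q₁`, and the identity for `g₃` holds over any commutative ring: its two sides differ
by `v` times the first equation minus the second. -/

theorem g₃_eq_of_Q₁_equations {R : Type*} [CommRing R] {u v X₀ X₁ X₂ X₃ : R}
    (h1 : X₃ ^ 2 + X₁ * X₃ = (X₀ + u * X₁ + v * X₂) * X₁) (h2 : X₁ ^ 2 = X₀ * X₂) :
    (X₀ + v * (X₁ + X₃)) * (X₂ + X₃) =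
      v * ((X₀ + v * X₂) * X₁) + (1 + u * v) * X₁ ^ 2 + (v * X₁ * X₂ + (X₀ + v * X₂) * X₃) := by
  linear_combination v * h1 - h2

/-- In characteristic 2, the forms `g₀ = (X₀+vX₂)²`, `g₁ = (X₁+X₃)X₃`,
`g₂ = X₁²`, `g₃ = (X₀+v(X₁+X₃))(X₂+X₃)` span, modulo the relations of
`Q₁`, the same space as the defining forms `(f₀,f₁,f₂,f₃)` of the
2-isogeny `ψ : Q₁ → Q₂`: explicitly `g₀ = f₀`, `g₂ = f₂`,
`g₁ = f₁ + u·f₂`, `g₃ = v·f₁ + (1+uv)·f₂ + f₃` hold on `Q₁`. -/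
theorem psi_forms_char_two {k : Type*} [Field k] [CharP k 2]
    (u v : k) (X₀ X₁ X₂ X₃ : k)
    (h1 : X₃ ^ 2 + X₁ * X₃ = (X₀ + u * X₁ - v * X₂) * X₁)
    (h2 : X₁ ^ 2 = X₀ * X₂) :
    (let f₀ := (X₀ - v * X₂) ^ 2
     let f₁ := (X₀ - v * X₂) * X₁
     let f₂ := X₁ ^ 2
     let f₃ := v * X₁ * X₂ + (X₀ + v * X₂) * X₃
     let g₀ := (X₀ + v * X₂) ^ 2
     let g₁ := (X₁ + X₃) * X₃
     let g₂ := X₁ ^ 2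
     let g₃ := (X₀ + v * (X₁ + X₃)) * (X₂ + X₃)
     g₀ = f₀ ∧ g₂ = f₂ ∧ g₁ = f₁ + u * f₂ ∧
       g₃ = v * f₁ + (1 + u * v) * f₂ + f₃) := by
  dsimp only
  rw [CharTwo.sub_eq_add] at h1 ⊢
  exact ⟨rfl, rfl, by linear_combination h1, g₃_eq_of_Q₁_equations h1 h2⟩
end

section
/- Let k be a field, u, v ∈ k with v ≠ 0. Define τ_T(X₀,X₁,X₂,X₃) = (vX₂, −X₁, v⁻¹X₀, X₁ + X₃). If (X₀,X₁,X₂,X₃) ∈ k⁴ satisfies the equations of Q₁ (namely X₃² + X₁X₃ = (X₀ + uX₁ − vX₂)X₁ and X₁² = X₀X₂), then so does τ_T(X₀,X₁,X₂,X₃); moreover τ_T(τ_T(X₀,X₁,X₂,X₃)) = (X₀,X₁,X₂,X₃), so τ_T is a linear involution of Q₁ (translation by the 2-torsion point T = (0:0:1:0)). -/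
namespace Q₁

variable {k : Type*} [Field k]

/-- `P = (X₀, X₁, X₂, X₃)` lies on the affine cone over `Q₁`. -/
def IsPoint (u v : k) (P : k × k × k × k) : Prop :=
  P.2.2.2 ^ 2 + P.2.1 * P.2.2.2 = (P.1 + u * P.2.1 - v * P.2.2.1) * P.2.1 ∧
    P.2.1 ^ 2 = P.1 * P.2.2.1

def translationT (v : k) (P : k × k × k × k) : k × k × k × k :=
  (v * P.2.2.1, -P.2.1, v⁻¹ * P.1, P.2.1 + P.2.2.2)

theorem isPoint_translationT {u v : k} (hv : v ≠ 0) {P : k × k × k × k}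
    (hP : IsPoint u v P) : IsPoint u v (translationT v P) := by
  obtain ⟨X₀, X₁, X₂, X₃⟩ := P
  obtain ⟨h1, h2⟩ := hP
  simp only [IsPoint, translationT] at h1 h2 ⊢
  have hv' : v * v⁻¹ = 1 := mul_inv_cancel₀ hv
  constructor
  · linear_combination h1 - X₀ * X₁ * hv'
  · linear_combination h2 - X₀ * X₂ * hv'

theorem translationT_involutive {v : k} (hv : v ≠ 0) :
    Function.Involutive (translationT v) := by
  rintro ⟨X₀, X₁, X₂, X₃⟩
  simp only [translationT, neg_neg, neg_add_cancel_left, mul_inv_cancel_left₀ hv,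
    inv_mul_cancel_left₀ hv]

end Q₁

open Q₁ in
/-- Translation by the 2-torsion point `T = (0:0:1:0)` on `Q₁`,
`τ_T(X₀,X₁,X₂,X₃) = (vX₂, −X₁, v⁻¹X₀, X₁+X₃)`, preserves the equations
of `Q₁` and is an involution. -/
theorem translation_by_T_linear_involution {k : Type*} [Field k]
    (u v : k) (hv : v ≠ 0) (X₀ X₁ X₂ X₃ : k)
    (h1 : X₃ ^ 2 + X₁ * X₃ = (X₀ + u * X₁ - v * X₂) * X₁)
    (h2 : X₁ ^ 2 = X₀ * X₂) :
    (let τ : k × k × k × k → k × k × k × k := fun P =>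
      (v * P.2.2.1, -P.2.1, v⁻¹ * P.1, P.2.1 + P.2.2.2)
     let Y := τ (X₀, X₁, X₂, X₃)
     (Y.2.2.2 ^ 2 + Y.2.1 * Y.2.2.2 =
        (Y.1 + u * Y.2.1 - v * Y.2.2.1) * Y.2.1 ∧
      Y.2.1 ^ 2 = Y.1 * Y.2.2.1) ∧
     τ (τ (X₀, X₁, X₂, X₃)) = (X₀, X₁, X₂, X₃)) :=
  ⟨isPoint_translationT hv ⟨h1, h2⟩, translationT_involutive hv _⟩
end

section
/- Let k be a field and u, v ∈ k. If (X₀,X₁,X₂,X₃) ∈ k⁴ satisfies the equations of Q₁ (namely X₃² + X₁X₃ = (X₀ + uX₁ − vX₂)X₁ and X₁² = X₀X₂), then the triple (X, Y, Z) = (X₀, X₁ + 2X₃, X₂) satisfies the quartic equation of D₁: (Y² − (4u+1)XZ)² = 16XZ(X − vZ)²; that is, the linear projection (X₀:X₁:X₂:X₃) ↦ (X₀ : X₁+2X₃ : X₂) maps Q₁ onto the singular quartic plane curve D₁. -/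
/-- The linear projection `(X₀:X₁:X₂:X₃) ↦ (X₀ : X₁+2X₃ : X₂)` maps
points of `Q₁` to points of the singular quartic plane curve
`D₁ : (Y² − (4u+1)XZ)² = 16XZ(X − vZ)²`. -/
theorem projection_Q1_to_D1 {k : Type*} [Field k] (u v : k)
    (X₀ X₁ X₂ X₃ : k)
    (h1 : X₃ ^ 2 + X₁ * X₃ = (X₀ + u * X₁ - v * X₂) * X₁)
    (h2 : X₁ ^ 2 = X₀ * X₂) :
    (let X := X₀
     let Y := X₁ + 2 * X₃
     let Z := X₂
     (Y ^ 2 - (4 * u + 1) * X * Z) ^ 2 =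
       16 * X * Z * (X - v * Z) ^ 2) := by
  have hY : (X₁ + 2 * X₃) ^ 2 - (4 * u + 1) * X₀ * X₂ = 4 * X₁ * (X₀ - v * X₂) := by
    linear_combination 4 * h1 + (4 * u + 1) * h2
  show ((X₁ + 2 * X₃) ^ 2 - (4 * u + 1) * X₀ * X₂) ^ 2 = 16 * X₀ * X₂ * (X₀ - v * X₂) ^ 2
  rw [hY]
  linear_combination 16 * (X₀ - v * X₂) ^ 2 * h2
end
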